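/- The relative error of Integrator F, E(s) = 1 - (e^{-sh} + (2h/3)s + (h/3)s e^{-sh} - (h²/6)s²), has a zero of order at least 4 at s = 0. -/

import Mathlib

/-! The relative error is `exp (-h s) (-1 - h s / 3) + (1 - 2 h s / 3 + h² s² / 6)`. Functions of the
form `exp (c s) · (linear) + (quadratic)` are closed under differentiation, which acts on their
five coefficients by an explicit map; following the coefficients through three derivatives and
evaluating at `0` gives `0` each time. -/

open Complex

noncomputable def expLinAddQuad (c a b p₀ p₁ p₂ : ℂ) (s : ℂ) : ℂ :=
  exp (c * s) * (a + b * s) + (p₀ + p₁ * s + p₂ * s ^ 2)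

section

variable (c a b p₀ p₁ p₂ : ℂ)

theorem hasDerivAt_expLinAddQuad (s : ℂ) :
    HasDerivAt (expLinAddQuad c a b p₀ p₁ p₂)
      (expLinAddQuad c (a * c + b) (b * c) p₁ (2 * p₂) 0 s) s := by
  have hexp : HasDerivAt (fun s => exp (c * s)) (exp (c * s) * c) s :=
    ((hasDerivAt_id s).const_mul c).cexp.congr_deriv (by simp)
  have hlin : HasDerivAt (fun s => a + b * s) b s :=
    ((hasDerivAt_id s).const_mul b).const_add a |>.congr_deriv (by simp)
  have hquad : HasDerivAt (fun s => p₀ + p₁ * s + p₂ * s ^ 2) (p₁ + p₂ * (2 * s)) s := by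
    refine ((((hasDerivAt_id s).const_mul p₁).const_add p₀).add
      ((hasDerivAt_pow 2 s).const_mul p₂)).congr_deriv ?_
    simp
  refine ((hexp.mul hlin).add hquad).congr_deriv ?_
  simp only [expLinAddQuad]
  ring

theorem deriv_expLinAddQuad :
    deriv (expLinAddQuad c a b p₀ p₁ p₂) = expLinAddQuad c (a * c + b) (b * c) p₁ (2 * p₂) 0 :=
  funext fun s => (hasDerivAt_expLinAddQuad c a b p₀ p₁ p₂ s).deriv

theorem expLinAddQuad_zero : expLinAddQuad c a b p₀ p₁ p₂ 0 = a + p₀ := by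
  simp [expLinAddQuad]

end

theorem stmt14_general (h : ℝ) (E : ℂ → ℂ)
    (hE : E = fun s => 1 - (Complex.exp (-s * h) + (2 * (h : ℂ) / 3) * s
      + ((h : ℂ) / 3) * s * Complex.exp (-s * h) - ((h : ℂ) ^ 2 / 6) * s ^ 2)) :
    ∀ k ≤ 3, iteratedDeriv k E 0 = 0 := by
  have hE' : E = expLinAddQuad (-h) (-1) (-h / 3) 1 (-2 * h / 3) (h ^ 2 / 6) := by
    funext s
    subst hE
    rw [expLinAddQuad, show -(h : ℂ) * s = -s * h by ring]
    ring
  intro k hk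
  interval_cases k <;>
    simp only [hE', iteratedDeriv_zero, iteratedDeriv_succ', deriv_expLinAddQuad,
      expLinAddQuad_zero] <;>
    ring

theorem stmt14 (h : ℝ) (hh : 0 < h) (E : ℂ → ℂ)
    (hE : E = fun s => 1 - (Complex.exp (-s * h) + (2 * (h : ℂ) / 3) * s
      + ((h : ℂ) / 3) * s * Complex.exp (-s * h) - ((h : ℂ) ^ 2 / 6) * s ^ 2)) :
    ∀ k ≤ 3, iteratedDeriv k E 0 = 0 :=
  stmt14_general h E hE
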